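/- Assume the bipartite Bloch data of the context and that ρ is separable. Then ‖T^{(AB)}‖_tr ≤ √( ((d_A²−d_A)/κ_A)·((d_B²−d_B)/κ_B) ); in particular, when κ_A = κ_B = 2 this gives de Vicente's bound ‖T^{(AB)}‖_tr ≤ √(d_A d_B (d_A−1)(d_B−1)/4). -/

import Mathlib

open Matrix ComplexOrder
open scoped Kronecker

/-- The trace norm `‖A‖_tr = Tr((A†A)^{1/2})` of a complex matrix (the sum of its
singular values). -/
noncomputable def traceNorm {m n : Type*} [Fintype m] [Fintype n] [DecidableEq n]
    (A : Matrix m n ℂ) : ℝ :=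
  ((Matrix.posSemidef_conjTranspose_mul_self A).1.eigenvectorUnitary.1 *
    diagonal (((↑) : ℝ → ℂ) ∘ (√·) ∘ (Matrix.posSemidef_conjTranspose_mul_self A).1.eigenvalues) *
    (star (Matrix.posSemidef_conjTranspose_mul_self A).1.eigenvectorUnitary : Matrix n n ℂ)).trace.re

/-!
Pairing `ρ` with `G_i† ⊗ G_j†` extracts `T^{(AB)}`, so for `ρ = Σ_k p_k σ_k ⊗ τ_k` one gets
`T^{(AB)} = Σ_k p_k r_k s_kᵀ`, where `r_k`, `s_k` are the Bloch vectors of the pure factors.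
Bessel's inequality for the orthonormal family `{I/√d} ∪ {G_i/√κ}` (Frobenius inner product)
gives `‖r‖² ≤ (d² − d)/κ` for a pure state, and the trace norm of a sum of rank-one matrices is
at most `Σ_k ‖u_k‖ ‖v_k‖`, because `‖T‖_tr = Re Tr(X† T)` for a contraction `X`.
-/

open scoped Matrix.Norms.L2Operator

lemma norm_dotProduct_le {n : Type*} [Fintype n] (a b : n → ℂ) :
    ‖a ⬝ᵥ b‖ ≤ ‖WithLp.toLp 2 a‖ * ‖WithLp.toLp 2 b‖ := by
  have := norm_inner_le_norm (𝕜 := ℂ) (WithLp.toLp 2 (star a)) (WithLp.toLp 2 b)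
  rw [EuclideanSpace.inner_toLp_toLp, star_star, dotProduct_comm] at this
  convert this using 2
  simp [EuclideanSpace.norm_eq]

section TraceNorm

variable {m n : Type*} [Fintype m] [Fintype n] [DecidableEq n]

lemma exists_l2_opNorm_le_one_traceNorm_eq (A : Matrix m n ℂ) :
    ∃ X : Matrix m n ℂ, ‖X‖ ≤ 1 ∧ traceNorm A = (Xᴴ * A).trace.re := by
  have hpsd := posSemidef_conjTranspose_mul_self A
  set μ := hpsd.1.eigenvalues
  set φ := Unitary.conjStarAlgAut ℂ (Matrix n n ℂ) hpsd.1.eigenvectorUnitary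
  have hAA : Aᴴ * A = φ (diagonal (((↑) : ℝ → ℂ) ∘ μ)) := hpsd.1.spectral_theorem
  -- Since `(√0)⁻¹ = 0`, `C` is the pseudo-inverse of `|A| = (A†A)^{1/2}`, and `X = A C` is the
  -- partial isometry of the polar decomposition `A = X |A|`.
  set C := φ (diagonal fun i => (((√(μ i))⁻¹ : ℝ) : ℂ))
  have hC : Cᴴ = C := by
    rw [← star_eq_conjTranspose, ← map_star, star_eq_conjTranspose, diagonal_conjTranspose]
    congr; funext i; simp
  have hCAA : C * (Aᴴ * A) = φ (diagonal (((↑) : ℝ → ℂ) ∘ (√·) ∘ μ)) := by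
    rw [hAA, ← map_mul, diagonal_mul_diagonal]
    congr; funext i
    simp only [Function.comp_apply, ← Complex.ofReal_mul]
    exact congrArg _ <| by rw [inv_mul_eq_div, Real.div_sqrt]
  refine ⟨A * C, ?_, ?_⟩
  · have hXX : (A * C)ᴴ * (A * C) = φ (diagonal fun i => ((√(μ i) * (√(μ i))⁻¹ : ℝ) : ℂ)) := by
      rw [conjTranspose_mul, hC, Matrix.mul_assoc, ← Matrix.mul_assoc Aᴴ, ← Matrix.mul_assoc, hCAA,
        ← map_mul, diagonal_mul_diagonal]
      congr; funext i; simp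
    have hsq : ‖A * C‖ * ‖A * C‖ ≤ 1 := by
      rw [← l2_opNorm_conjTranspose_mul_self, hXX, StarAlgEquiv.norm_map, l2_opNorm_diagonal]
      refine pi_norm_le_iff_of_nonneg zero_le_one |>.2 fun i => ?_
      rw [Complex.norm_real, Real.norm_of_nonneg (by positivity)]
      exact mul_inv_le_one
    nlinarith [norm_nonneg (A * C)]
  · rw [conjTranspose_mul, hC, Matrix.mul_assoc, hCAA]
    rfl

lemma traceNorm_sum_vecMulVec_le {ι : Type*} [Fintype ι] (u : ι → m → ℂ) (v : ι → n → ℂ) :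
    traceNorm (∑ k, vecMulVec (u k) (v k)) ≤
      ∑ k, ‖WithLp.toLp 2 (u k)‖ * ‖WithLp.toLp 2 (v k)‖ := by
  classical
  obtain ⟨X, hX, htr⟩ := exists_l2_opNorm_le_one_traceNorm_eq (∑ k, vecMulVec (u k) (v k))
  rw [htr, Matrix.mul_sum, trace_sum, Complex.re_sum]
  gcongr with k
  rw [mul_vecMulVec, trace_vecMulVec]
  calc (Xᴴ *ᵥ u k ⬝ᵥ v k).re ≤ ‖Xᴴ *ᵥ u k ⬝ᵥ v k‖ := Complex.re_le_norm _
    _ ≤ ‖WithLp.toLp 2 (Xᴴ *ᵥ u k)‖ * ‖WithLp.toLp 2 (v k)‖ := norm_dotProduct_le _ _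
    _ ≤ ‖WithLp.toLp 2 (u k)‖ * ‖WithLp.toLp 2 (v k)‖ := by
      gcongr
      calc ‖WithLp.toLp 2 (Xᴴ *ᵥ u k)‖ ≤ ‖Xᴴ‖ * ‖WithLp.toLp 2 (u k)‖ :=
            l2_opNorm_mulVec Xᴴ (WithLp.toLp 2 (u k))
        _ ≤ ‖WithLp.toLp 2 (u k)‖ := by
          rw [l2_opNorm_conjTranspose]
          exact mul_le_of_le_one_left (norm_nonneg _) hX

end TraceNorm

lemma inner_toLp_vec {m n : Type*} [Fintype m] [Fintype n] (A B : Matrix m n ℂ) :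
    inner ℂ (WithLp.toLp 2 A.vec) (WithLp.toLp 2 B.vec) = (Aᴴ * B).trace := by
  rw [EuclideanSpace.inner_toLp_toLp, dotProduct_comm, star_vec_dotProduct_vec]

/-- For a complete family, a state of trace one is `σ = (I + Σ_i r_i G_i) / d` with
`r = blochVector G κ σ` and `d = Fintype.card n`. -/
noncomputable def blochVector {n ι : Type*} [Fintype n] (G : ι → Matrix n n ℂ) (κ : ℝ)
    (σ : Matrix n n ℂ) : ι → ℂ :=
  fun i => (Fintype.card n / κ : ℂ) * ((G i)ᴴ * σ).trace

section Bessel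

variable {n ι : Type*} [Fintype n] [DecidableEq n] [Nonempty n] [Fintype ι] [DecidableEq ι]
  {κ : ℝ} {G : ι → Matrix n n ℂ}

lemma sum_norm_trace_sq_div_add_le (hκ : 0 < κ) (hGtr : ∀ i, (G i).trace = 0)
    (hGorth : ∀ i j, ((G i)ᴴ * G j).trace = if i = j then (κ : ℂ) else 0) (σ : Matrix n n ℂ) :
    ∑ i, ‖((G i)ᴴ * σ).trace‖ ^ 2 / κ + ‖σ.trace‖ ^ 2 / Fintype.card n ≤ (σᴴ * σ).trace.re := by
  have hd : (0 : ℝ) < Fintype.card n := by exact_mod_cast Fintype.card_pos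
  let e : Option ι → EuclideanSpace ℂ (n × n) := fun o =>
    o.elim (((√(Fintype.card n : ℝ))⁻¹ : ℂ) • WithLp.toLp 2 (1 : Matrix n n ℂ).vec)
      fun i => ((√κ)⁻¹ : ℂ) • WithLp.toLp 2 (G i).vec
  have hnormalize : ∀ c : ℝ, 0 < c → ((√c : ℂ)⁻¹ * ((√c : ℂ)⁻¹ * c)) = 1 := fun c hc => by
    rw [← mul_assoc, ← mul_inv, ← Complex.ofReal_mul, Real.mul_self_sqrt hc.le,
      inv_mul_cancel₀ (by exact_mod_cast hc.ne')]
  have he : Orthonormal ℂ e := by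
    rw [orthonormal_iff_ite]
    rintro (_ | i) (_ | j) <;>
      simp only [e, Option.elim, inner_smul_left, inner_smul_right, inner_toLp_vec,
        conjTranspose_one, one_mul, mul_one, trace_conjTranspose, hGtr, hGorth, trace_one]
    · simpa using hnormalize _ hd
    · simp
    · simp
    · simp [hnormalize _ hκ]
  set x := WithLp.toLp 2 σ.vec
  have hx : ‖x‖ ^ 2 = (σᴴ * σ).trace.re := by rw [@norm_sq_eq_re_inner ℂ, inner_toLp_vec]; rfl
  have h1 : ‖inner ℂ (e none) x‖ ^ 2 = ‖σ.trace‖ ^ 2 / Fintype.card n := by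
    simp [e, x, inner_toLp_vec, mul_pow, div_eq_mul_inv, hd.le]
  have hG : ∀ i, ‖inner ℂ (e (some i)) x‖ ^ 2 = ‖((G i)ᴴ * σ).trace‖ ^ 2 / κ := by
    intro i
    simp [e, x, inner_toLp_vec, mul_pow, div_eq_mul_inv, hκ.le]
  have hb := he.sum_inner_products_le (s := Finset.univ) x
  rw [Fintype.sum_option, h1, hx] at hb
  simp only [hG] at hb
  linarith

lemma norm_blochVector_le_of_pure (hκ : 0 < κ) (hGtr : ∀ i, (G i).trace = 0)
    (hGorth : ∀ i j, ((G i)ᴴ * G j).trace = if i = j then (κ : ℂ) else 0)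
    {σ : Matrix n n ℂ} (hσ : σ.IsHermitian) (htr : σ.trace = 1) (hpure : σ * σ = σ) :
    ‖WithLp.toLp 2 (blochVector G κ σ)‖ ≤ √(((Fintype.card n : ℝ) ^ 2 - Fintype.card n) / κ) := by
  have hd : (0 : ℝ) < Fintype.card n := by exact_mod_cast Fintype.card_pos
  have hb := sum_norm_trace_sq_div_add_le hκ hGtr hGorth σ
  rw [hσ.eq, hpure, htr, ← Finset.sum_div] at hb
  simp only [norm_one, one_pow, Complex.one_re] at hb
  have hS : ∑ i, ‖((G i)ᴴ * σ).trace‖ ^ 2 ≤ κ * (1 - 1 / Fintype.card n) := by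
    rw [← div_le_iff₀' hκ]; linarith
  refine Real.le_sqrt_of_sq_le ?_
  rw [EuclideanSpace.norm_sq_eq]
  simp only [blochVector, norm_mul, mul_pow, ← Finset.mul_sum]
  calc _ ≤ ((Fintype.card n : ℝ) / κ) ^ 2 * (κ * (1 - 1 / Fintype.card n)) := by
        rw [norm_div, Complex.norm_natCast, Complex.norm_real, Real.norm_of_nonneg hκ.le]
        gcongr
    _ = _ := by field_simp

end Bessel

lemma trace_kronecker_mul_kronecker {m n : Type*} [Fintype m] [Fintype n]
    (A C : Matrix m m ℂ) (B D : Matrix n n ℂ) :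
    ((A ⊗ₖ B) * (C ⊗ₖ D)).trace = (A * C).trace * (B * D).trace := by
  rw [← mul_kronecker_mul, trace_kronecker]

section Bipartite

variable {nA nB ιA ιB : Type*} [Fintype nA] [Fintype nB] [DecidableEq nA] [DecidableEq nB]
  [Fintype ιA] [Fintype ιB] [DecidableEq ιA] [DecidableEq ιB]
  {κA κB : ℝ} {GA : ιA → Matrix nA nA ℂ} {GB : ιB → Matrix nB nB ℂ}

lemma trace_kronecker_conjTranspose_mul_blochExpansion (hGAtr : ∀ i, (GA i).trace = 0)
    (hGAorth : ∀ i j, ((GA i)ᴴ * GA j).trace = if i = j then (κA : ℂ) else 0)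
    (hGBtr : ∀ i, (GB i).trace = 0)
    (hGBorth : ∀ i j, ((GB i)ᴴ * GB j).trace = if i = j then (κB : ℂ) else 0)
    (TA : ιA → ℂ) (TB : ιB → ℂ) (TAB : Matrix ιA ιB ℂ) (i : ιA) (j : ιB) :
    (((GA i)ᴴ ⊗ₖ (GB j)ᴴ) * ((1 : Matrix nA nA ℂ) ⊗ₖ (1 : Matrix nB nB ℂ)
        + ∑ k, TA k • (GA k ⊗ₖ (1 : Matrix nB nB ℂ))
        + ∑ l, TB l • ((1 : Matrix nA nA ℂ) ⊗ₖ GB l)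
        + ∑ k, ∑ l, TAB k l • (GA k ⊗ₖ GB l))).trace = κA * κB * TAB i j := by
  simp [Matrix.mul_add, Matrix.mul_sum, trace_sum, trace_kronecker_mul_kronecker,
    trace_kronecker, trace_conjTranspose, mul_comm, hGAtr, hGBtr, hGAorth, hGBorth]

lemma blochCorrelation_eq_sum_vecMulVec_of_separable [Nonempty nA] [Nonempty nB]
    (hκA : κA ≠ 0) (hκB : κB ≠ 0) (hGAtr : ∀ i, (GA i).trace = 0)
    (hGAorth : ∀ i j, ((GA i)ᴴ * GA j).trace = if i = j then (κA : ℂ) else 0)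
    (hGBtr : ∀ i, (GB i).trace = 0)
    (hGBorth : ∀ i j, ((GB i)ᴴ * GB j).trace = if i = j then (κB : ℂ) else 0)
    {ρ : Matrix (nA × nB) (nA × nB) ℂ} {TA : ιA → ℂ} {TB : ιB → ℂ} {TAB : Matrix ιA ιB ℂ}
    (hrep : ρ = ((Fintype.card nA : ℂ) * Fintype.card nB)⁻¹ •
      ((1 : Matrix nA nA ℂ) ⊗ₖ (1 : Matrix nB nB ℂ)
        + ∑ k, TA k • (GA k ⊗ₖ (1 : Matrix nB nB ℂ))
        + ∑ l, TB l • ((1 : Matrix nA nA ℂ) ⊗ₖ GB l)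
        + ∑ k, ∑ l, TAB k l • (GA k ⊗ₖ GB l)))
    {ι : Type*} [Fintype ι] {w : ι → ℂ} {σ : ι → Matrix nA nA ℂ} {τ : ι → Matrix nB nB ℂ}
    (hsep : ρ = ∑ k, w k • (σ k ⊗ₖ τ k)) :
    TAB = ∑ k, vecMulVec (w k • blochVector GA κA (σ k)) (blochVector GB κB (τ k)) := by
  ext i j
  have key := congrArg (fun M => (((GA i)ᴴ ⊗ₖ (GB j)ᴴ) * M).trace) (hrep.symm.trans hsep)
  simp only [Matrix.mul_smul, trace_smul, Matrix.mul_sum, trace_sum, trace_kronecker_mul_kronecker,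
    trace_kronecker_conjTranspose_mul_blochExpansion hGAtr hGAorth hGBtr hGBorth, smul_eq_mul] at key
  simp only [Matrix.sum_apply, vecMulVec_apply, blochVector, Pi.smul_apply, smul_eq_mul]
  have hdA : (Fintype.card nA : ℂ) ≠ 0 := Nat.cast_ne_zero.2 Fintype.card_ne_zero
  have hdB : (Fintype.card nB : ℂ) ≠ 0 := Nat.cast_ne_zero.2 Fintype.card_ne_zero
  have hκAB : (κA : ℂ) * κB ≠ 0 := by exact_mod_cast mul_ne_zero hκA hκB
  calc TAB i j = Fintype.card nA * Fintype.card nB / (κA * κB) *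
        ((Fintype.card nA * Fintype.card nB : ℂ)⁻¹ * (κA * κB * TAB i j)) := by
        field_simp
    _ = _ := by
      rw [key, Finset.mul_sum]
      exact Finset.sum_congr rfl fun k _ => by ring

end Bipartite

theorem stmt_3_general
    (dA dB : ℕ) (hdA : 1 ≤ dA) (hdB : 1 ≤ dB)
    (κA κB : ℝ) (hκA : 0 < κA) (hκB : 0 < κB)
    (GA : Fin (dA ^ 2 - 1) → Matrix (Fin dA) (Fin dA) ℂ)
    (GB : Fin (dB ^ 2 - 1) → Matrix (Fin dB) (Fin dB) ℂ)
    (hGAtr : ∀ i, (GA i).trace = 0)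
    (hGAorth : ∀ i j, ((GA i)ᴴ * GA j).trace = if i = j then (κA : ℂ) else 0)
    (hGBtr : ∀ i, (GB i).trace = 0)
    (hGBorth : ∀ i j, ((GB i)ᴴ * GB j).trace = if i = j then (κB : ℂ) else 0)
    (ρ : Matrix (Fin dA × Fin dB) (Fin dA × Fin dB) ℂ)
    (TA : Fin (dA ^ 2 - 1) → ℂ) (TB : Fin (dB ^ 2 - 1) → ℂ)
    (TAB : Matrix (Fin (dA ^ 2 - 1)) (Fin (dB ^ 2 - 1)) ℂ)
    (hrep : ρ = (((dA : ℂ) * dB))⁻¹ •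
      ((1 : Matrix (Fin dA) (Fin dA) ℂ) ⊗ₖ (1 : Matrix (Fin dB) (Fin dB) ℂ)
        + ∑ i, TA i • (GA i ⊗ₖ (1 : Matrix (Fin dB) (Fin dB) ℂ))
        + ∑ j, TB j • ((1 : Matrix (Fin dA) (Fin dA) ℂ) ⊗ₖ GB j)
        + ∑ i, ∑ j, TAB i j • (GA i ⊗ₖ GB j)))
    (hsep : ∃ (M : ℕ) (w : Fin M → ℝ)
        (σ : Fin M → Matrix (Fin dA) (Fin dA) ℂ)
        (τ : Fin M → Matrix (Fin dB) (Fin dB) ℂ),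
      (∀ i, 0 ≤ w i) ∧ (∑ i, w i = 1) ∧
      (∀ i, (σ i).PosSemidef ∧ (σ i).trace = 1 ∧ σ i * σ i = σ i) ∧
      (∀ i, (τ i).PosSemidef ∧ (τ i).trace = 1 ∧ τ i * τ i = τ i) ∧
      ρ = ∑ i, (w i : ℂ) • (σ i ⊗ₖ τ i))
    :
    traceNorm TAB ≤
        Real.sqrt ((((dA : ℝ) ^ 2 - dA) / κA) * (((dB : ℝ) ^ 2 - dB) / κB)) ∧
      (κA = 2 → κB = 2 →
        traceNorm TAB ≤
          Real.sqrt ((dA : ℝ) * dB * ((dA : ℝ) - 1) * ((dB : ℝ) - 1) / 4)) := by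
  obtain ⟨M, w, σ, τ, hw0, hw1, hσ, hτ, hsep⟩ := hsep
  have : Nonempty (Fin dA) := ⟨⟨0, hdA⟩⟩
  have : Nonempty (Fin dB) := ⟨⟨0, hdB⟩⟩
  have hT := blochCorrelation_eq_sum_vecMulVec_of_separable hκA.ne' hκB.ne' hGAtr hGAorth hGBtr
    hGBorth (by simpa only [Fintype.card_fin] using hrep) hsep
  have hbound := calc
    traceNorm TAB ≤ ∑ k, ‖WithLp.toLp 2 ((w k : ℂ) • blochVector GA κA (σ k))‖ *
        ‖WithLp.toLp 2 (blochVector GB κB (τ k))‖ := hT ▸ traceNorm_sum_vecMulVec_le _ _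
    _ ≤ ∑ k, w k * (√(((dA : ℝ) ^ 2 - dA) / κA) * √(((dB : ℝ) ^ 2 - dB) / κB)) := by
      refine Finset.sum_le_sum fun k _ => ?_
      rw [WithLp.toLp_smul, norm_smul, Complex.norm_real, Real.norm_of_nonneg (hw0 k), mul_assoc]
      have hA := norm_blochVector_le_of_pure hκA hGAtr hGAorth (hσ k).1.isHermitian (hσ k).2.1
        (hσ k).2.2
      have hB := norm_blochVector_le_of_pure hκB hGBtr hGBorth (hτ k).1.isHermitian (hτ k).2.1
        (hτ k).2.2
      simp only [Fintype.card_fin] at hA hB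
      gcongr
      exact hw0 k
    _ = √((((dA : ℝ) ^ 2 - dA) / κA) * (((dB : ℝ) ^ 2 - dB) / κB)) := by
      have : (1 : ℝ) ≤ dB := by exact_mod_cast hdB
      rw [← Finset.sum_mul, hw1, one_mul, Real.sqrt_mul' _ (div_nonneg (by nlinarith) hκB.le)]
  refine ⟨hbound, fun h2A h2B => hbound.trans_eq ?_⟩
  rw [h2A, h2B]
  ring_nf

/-- If the bipartite state `ρ` is separable, then the trace norm of its
correlation tensor satisfies `‖T^{(AB)}‖_tr ≤ √(((d_A²−d_A)/κ_A)·((d_B²−d_B)/κ_B))`;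
in particular for `κ_A = κ_B = 2` this is de Vicente's bound
`√(d_A d_B (d_A−1)(d_B−1)/4)`. -/
theorem stmt_3
    (dA dB : ℕ) (hdA : 1 ≤ dA) (hdB : 1 ≤ dB)
    (κA κB : ℝ) (hκA : 0 < κA) (hκB : 0 < κB)
    (GA : Fin (dA ^ 2 - 1) → Matrix (Fin dA) (Fin dA) ℂ)
    (GB : Fin (dB ^ 2 - 1) → Matrix (Fin dB) (Fin dB) ℂ)
    (hGAtr : ∀ i, (GA i).trace = 0)
    (hGAorth : ∀ i j, ((GA i)ᴴ * GA j).trace = if i = j then (κA : ℂ) else 0)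
    (hGBtr : ∀ i, (GB i).trace = 0)
    (hGBorth : ∀ i j, ((GB i)ᴴ * GB j).trace = if i = j then (κB : ℂ) else 0)
    (ρ : Matrix (Fin dA × Fin dB) (Fin dA × Fin dB) ℂ)
    (hρ : ρ.PosSemidef) (hρtr : ρ.trace = 1)
    (TA : Fin (dA ^ 2 - 1) → ℂ) (TB : Fin (dB ^ 2 - 1) → ℂ)
    (TAB : Matrix (Fin (dA ^ 2 - 1)) (Fin (dB ^ 2 - 1)) ℂ)
    (hrep : ρ = (((dA : ℂ) * dB))⁻¹ •
      ((1 : Matrix (Fin dA) (Fin dA) ℂ) ⊗ₖ (1 : Matrix (Fin dB) (Fin dB) ℂ)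
        + ∑ i, TA i • (GA i ⊗ₖ (1 : Matrix (Fin dB) (Fin dB) ℂ))
        + ∑ j, TB j • ((1 : Matrix (Fin dA) (Fin dA) ℂ) ⊗ₖ GB j)
        + ∑ i, ∑ j, TAB i j • (GA i ⊗ₖ GB j)))
    (hsep : ∃ (M : ℕ) (w : Fin M → ℝ)
        (σ : Fin M → Matrix (Fin dA) (Fin dA) ℂ)
        (τ : Fin M → Matrix (Fin dB) (Fin dB) ℂ),
      (∀ i, 0 ≤ w i) ∧ (∑ i, w i = 1) ∧
      (∀ i, (σ i).PosSemidef ∧ (σ i).trace = 1 ∧ σ i * σ i = σ i) ∧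
      (∀ i, (τ i).PosSemidef ∧ (τ i).trace = 1 ∧ τ i * τ i = τ i) ∧
      ρ = ∑ i, (w i : ℂ) • (σ i ⊗ₖ τ i))
    :
    traceNorm TAB ≤
        Real.sqrt ((((dA : ℝ) ^ 2 - dA) / κA) * (((dB : ℝ) ^ 2 - dB) / κB)) ∧
      (κA = 2 → κB = 2 →
        traceNorm TAB ≤
          Real.sqrt ((dA : ℝ) * dB * ((dA : ℝ) - 1) * ((dB : ℝ) - 1) / 4)) :=
  stmt_3_general dA dB hdA hdB κA κB hκA hκB GA GB hGAtr hGAorth hGBtr hGBorth ρ TA TB TAB hrep hsep
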